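/- For each n ≥ 1 define fₙ : [0,1] → ℝ by fₙ(x) = max{0, (2^{2n-1}-1)/2^{n²+1} - |x - (2^{2n-1}+1)/2^{n²+1}|}. Then for every a = (aₙ) ∈ ℓ∞, the pointwise sum f = Σₙ aₙ fₙ is a well-defined Lipschitz function on [0,1] vanishing at 0, with Lipschitz norm ‖f‖ = sup_n |aₙ|, and f attains its pointwise norm. Consequently, the map a ↦ Σₙ aₙ fₙ is a linear isometric embedding of ℓ∞ into Lip₀([0,1]) whose image is contained in PNA([0,1]) ∪ {0}. -/
import Mathlib


open Filter Metric MeasureTheory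

noncomputable def lipNorm {M : Type*} [MetricSpace M] (f : M → ℝ) : ℝ :=
  sSup {r : ℝ | ∃ p q : M, p ≠ q ∧ r = |f q - f p| / dist p q}

noncomputable def pnormAt {M : Type*} [MetricSpace M] (f : M → ℝ) (p : M) : ℝ :=
  sSup {r : ℝ | ∃ q : M, q ≠ p ∧ r = |f q - f p| / dist p q}

/-- `f` strongly attains its (Lipschitz) norm. -/
def StronglyAttains {M : Type*} [MetricSpace M] (f : M → ℝ) : Prop :=
  ∃ p q : M, p ≠ q ∧ |f q - f p| / dist p q = lipNorm f

/-- `f` attains its pointwise norm. -/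
def PointwiseAttains {M : Type*} [MetricSpace M] (f : M → ℝ) : Prop :=
  ∃ p : M, pnormAt f p = lipNorm f

/-- The tent function fₙ of STATEMENT 6 (meaningful for n ≥ 1). -/
noncomputable def tent (n : ℕ) (x : ℝ) : ℝ :=
  max 0 (((2:ℝ) ^ (2 * n - 1) - 1) / 2 ^ (n ^ 2 + 1) -
    |x - ((2:ℝ) ^ (2 * n - 1) + 1) / 2 ^ (n ^ 2 + 1)|)

namespace Stmt6

noncomputable def hh (n : ℕ) : ℝ := ((2:ℝ) ^ (n^2))⁻¹

noncomputable def g (n : ℕ) (x : ℝ) : ℝ := max 0 (min (x - hh (n+1)) (hh n - x))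

lemma hh_pos (n : ℕ) : 0 < hh n := by unfold hh; positivity

lemma hh_le_one (n : ℕ) : hh n ≤ 1 := by
  unfold hh
  rw [inv_le_one_iff₀]
  right; exact one_le_pow₀ (by norm_num)

lemma hh_anti : StrictAnti hh := by
  intro m n h
  unfold hh
  apply inv_strictAnti₀ (by positivity)
  exact pow_lt_pow_right₀ one_lt_two (Nat.pow_lt_pow_left h two_ne_zero)

lemma hh_succ_lt (n : ℕ) : hh (n+1) < hh n := hh_anti (Nat.lt_succ_self n)

lemma tent_eq (n : ℕ) (x : ℝ) : tent (n+1) x = g n x := by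
  have e1 : 2 * (n+1) - 1 = 2*n+1 := by omega
  have e2 : (2:ℝ) ^ ((n+1)^2) = 2 ^ (n^2) * 2 ^ (2*n+1) := by
    rw [← pow_add]; congr 1; ring
  have hA : (0:ℝ) < 2 ^ (n^2) := by positivity
  have hB : (0:ℝ) < 2 ^ ((n+1)^2) := by positivity
  have hc : ((2:ℝ) ^ (2*n+1) + 1) / 2 ^ ((n+1)^2+1) = (hh (n+1) + hh n)/2 := by
    unfold hh
    rw [pow_succ]
    field_simp
    rw [e2]; ring
  have hw : ((2:ℝ) ^ (2*n+1) - 1) / 2 ^ ((n+1)^2+1) = (hh n - hh (n+1))/2 := by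
    unfold hh
    rw [pow_succ]
    field_simp
    rw [e2]; ring
  unfold tent g
  rw [e1, hc, hw]
  have hAB := hh_succ_lt n
  set A := hh (n+1)
  set B := hh n
  congr 1
  rcases le_total x ((A+B)/2) with h | h
  · rw [abs_of_nonpos (by linarith), min_eq_left (by linarith)]; ring
  · rw [abs_of_nonneg (by linarith), min_eq_right (by linarith)]; ring

lemma g_nonneg (n : ℕ) (x : ℝ) : 0 ≤ g n x := le_max_left _ _

lemma g_eq_zero_left (n : ℕ) {x : ℝ} (h : x ≤ hh (n+1)) : g n x = 0 := by
  unfold g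
  rw [max_eq_left]
  exact le_trans (min_le_left _ _) (by linarith)

lemma g_eq_zero_right (n : ℕ) {x : ℝ} (h : hh n ≤ x) : g n x = 0 := by
  unfold g
  rw [max_eq_left]
  exact le_trans (min_le_right _ _) (by linarith)

lemma g_le_left (n : ℕ) {x : ℝ} (h : hh (n+1) ≤ x) : g n x ≤ x - hh (n+1) := by
  unfold g
  exact max_le (by linarith) (min_le_left _ _)

lemma g_le_right (n : ℕ) {x : ℝ} (h : x ≤ hh n) : g n x ≤ hh n - x := by
  unfold g
  exact max_le (by linarith) (min_le_right _ _)

lemma g_lip (n : ℕ) (x y : ℝ) : |g n y - g n x| ≤ |y - x| := by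
  unfold g
  calc |max 0 (min (y - hh (n+1)) (hh n - y)) - max 0 (min (x - hh (n+1)) (hh n - x))|
      ≤ max |0 - 0| |min (y - hh (n+1)) (hh n - y) - min (x - hh (n+1)) (hh n - x)| :=
        abs_max_sub_max_le_max _ _ _ _
    _ ≤ |y - x| := by
        apply max_le
        · simpa using abs_nonneg (y - x)
        · have h1 : (y - hh (n+1)) - (x - hh (n+1)) = y - x := by ring
          have h2 : (hh n - y) - (hh n - x) = -(y - x) := by ring
          refine le_trans (abs_min_sub_min_le_max _ _ _ _) (max_le ?_ ?_)
          · rw [h1]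
          · rw [h2, abs_neg]


lemma hh_le_of_le {m n : ℕ} (h : m ≤ n) : hh n ≤ hh m := hh_anti.antitone h

lemma cover {x : ℝ} (hx : 0 < x) (hx1 : x ≤ 1) :
    ∃ n, hh (n+1) ≤ x ∧ x ≤ hh n := by
  classical
  have hP : ∃ n, hh n ≤ x := by
    obtain ⟨N, hN⟩ := exists_pow_lt_of_lt_one hx (by norm_num : (2:ℝ)⁻¹ < 1)
    refine ⟨N, le_trans ?_ hN.le⟩
    unfold hh
    rw [← inv_pow]
    exact pow_le_pow_of_le_one (by norm_num) (by norm_num) (Nat.le_self_pow two_ne_zero N)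
  obtain ⟨n, hn⟩ := Nat.findX hP
  match n, hn with
  | 0, ⟨h0, _⟩ => exact ⟨0, le_trans (hh_le_of_le (by norm_num)) h0, by simpa [hh] using hx1⟩
  | (k+1), ⟨h1, h2⟩ => exact ⟨k, h1, le_of_not_gt fun hc => by simpa using h2 k (Nat.lt_succ_self k) hc.le⟩

lemma g_term_zero {m n : ℕ} (hmn : m ≠ n) {x : ℝ} (hx : hh (n+1) ≤ x) (hx' : x ≤ hh n) :
    g m x = 0 := by
  rcases lt_or_gt_of_ne hmn with h | h
  · exact g_eq_zero_left m (le_trans hx' (hh_le_of_le h))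
  · exact g_eq_zero_right m (le_trans (hh_le_of_le h) hx)

lemma summable_g (a : ℕ → ℝ) {x : ℝ} (hx0 : 0 ≤ x) (hx1 : x ≤ 1) :
    Summable (fun n => a n * g n x) := by
  rcases eq_or_lt_of_le hx0 with h | h
  · have : (fun n => a n * g n x) = fun _ => 0 := by
      funext n
      rw [g_eq_zero_left n (by rw [← h]; exact (hh_pos (n+1)).le), mul_zero]
    rw [this]; exact summable_zero
  · obtain ⟨n, hn1, hn2⟩ := cover h hx1
    apply summable_of_ne_finset_zero (s := {n})
    intro m hm
    rw [g_term_zero (by simpa using hm) hn1 hn2, mul_zero]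

lemma T_eq (a : ℕ → ℝ) {n : ℕ} {x : ℝ} (hx : hh (n+1) ≤ x) (hx' : x ≤ hh n) :
    (∑' m, a m * g m x) = a n * g n x := by
  exact tsum_eq_single n fun m hm => by rw [g_term_zero hm hx hx', mul_zero]

lemma T_zero (a : ℕ → ℝ) : (∑' m, a m * g m 0) = 0 := by
  have : (fun m => a m * g m 0) = fun _ => 0 := by
    funext m
    rw [g_eq_zero_left m (hh_pos (m+1)).le, mul_zero]
  rw [this, tsum_zero]

section Bounds

variable {a : ℕ → ℝ} {S : ℝ} (hS : ∀ n, |a n| ≤ S)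
include hS

lemma S_nonneg : 0 ≤ S := le_trans (abs_nonneg _) (hS 0)

lemma abs_T_le_left {x : ℝ} (hx0 : 0 ≤ x) (k : ℕ) (hxk : x ≤ hh k) :
    |∑' m, a m * g m x| ≤ S * (hh k - x) := by
  have hS0 := S_nonneg hS
  rcases eq_or_lt_of_le hx0 with h | h
  · rw [← h, T_zero]
    simpa using mul_nonneg hS0 (by simpa [← h] using hxk)
  · obtain ⟨m, hm1, hm2⟩ := cover h (le_trans hxk (hh_le_one k))
    rw [T_eq a hm1 hm2, abs_mul, abs_of_nonneg (g_nonneg m x)]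
    have hkm : k ≤ m + 1 := by
      by_contra hc
      exact absurd (le_trans hm1 hxk) (not_le.2 (hh_anti (by omega)))
    rcases Nat.lt_or_ge m k with h1 | h1
    · have hmk : m + 1 = k := by omega
      have : g m x ≤ x - hh k := by rw [← hmk]; exact g_le_left m hm1
      calc |a m| * g m x ≤ S * g m x := mul_le_mul_of_nonneg_right (hS m) (g_nonneg m x)
        _ ≤ S * (hh k - x) := mul_le_mul_of_nonneg_left (by linarith) hS0
    · calc |a m| * g m x ≤ S * g m x := mul_le_mul_of_nonneg_right (hS m) (g_nonneg m x)
        _ ≤ S * (hh k - x) := mul_le_mul_of_nonneg_left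
            (le_trans (g_le_right m hm2) (by linarith [hh_le_of_le h1])) hS0

lemma abs_T_le_right {x : ℝ} (hx1 : x ≤ 1) (k : ℕ) (hxk : hh k ≤ x) :
    |∑' m, a m * g m x| ≤ S * (x - hh k) := by
  have hS0 := S_nonneg hS
  obtain ⟨m, hm1, hm2⟩ := cover (lt_of_lt_of_le (hh_pos k) hxk) hx1
  rw [T_eq a hm1 hm2, abs_mul, abs_of_nonneg (g_nonneg m x)]
  have hkm : m ≤ k := by
    by_contra hc
    exact absurd (le_trans hxk hm2) (not_le.2 (hh_anti (show k < m by omega)))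
  rcases Nat.lt_or_ge m k with h1 | h1
  · calc |a m| * g m x ≤ S * g m x := mul_le_mul_of_nonneg_right (hS m) (g_nonneg m x)
      _ ≤ S * (x - hh k) := mul_le_mul_of_nonneg_left
          (le_trans (g_le_left m hm1) (by linarith [hh_le_of_le (show m + 1 ≤ k by omega)])) hS0
  · have hmk : m = k := le_antisymm hkm h1
    subst hmk
    calc |a m| * g m x ≤ S * g m x := mul_le_mul_of_nonneg_right (hS m) (g_nonneg m x)
      _ ≤ S * (x - hh m) := mul_le_mul_of_nonneg_left (le_trans (g_le_right m hm2) (by linarith)) hS0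

lemma key_bound_aux {x y : ℝ} (hx : x ∈ Set.Icc (0:ℝ) 1) (hy : y ∈ Set.Icc (0:ℝ) 1)
    (hxy : x ≤ y) : |(∑' m, a m * g m y) - ∑' m, a m * g m x| ≤ S * (y - x) := by
  have hS0 := S_nonneg hS
  rcases eq_or_lt_of_le hy.1 with h | h
  · have hx0 : x = 0 := le_antisymm (by linarith [hx.1]) hx.1
    rw [← h, hx0]
    simp
  · obtain ⟨n, hn1, hn2⟩ := cover h hy.2
    rcases le_or_gt x (hh (n+1)) with h1 | h1
    · calc |(∑' m, a m * g m y) - ∑' m, a m * g m x|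
          ≤ |∑' m, a m * g m y| + |∑' m, a m * g m x| := abs_sub _ _
        _ ≤ S * (y - hh (n+1)) + S * (hh (n+1) - x) :=
            add_le_add (abs_T_le_right hS hy.2 (n+1) hn1) (abs_T_le_left hS hx.1 (n+1) h1)
        _ = S * (y - x) := by ring
    · rw [T_eq a hn1 hn2, T_eq a h1.le (le_trans hxy hn2), ← mul_sub]
      calc |a n * (g n y - g n x)| = |a n| * |g n y - g n x| := abs_mul _ _
        _ ≤ S * (y - x) := by
            refine mul_le_mul (hS n) ?_ (abs_nonneg _) hS0
            simpa [abs_of_nonneg (show (0:ℝ) ≤ y - x by linarith)] using g_lip n x y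

lemma key_bound {x y : ℝ} (hx : x ∈ Set.Icc (0:ℝ) 1) (hy : y ∈ Set.Icc (0:ℝ) 1) :
    |(∑' m, a m * g m y) - ∑' m, a m * g m x| ≤ S * |y - x| := by
  rcases le_total x y with h | h
  · rw [abs_of_nonneg (sub_nonneg.2 h)]
    exact key_bound_aux hS hx hy h
  · rw [abs_sub_comm ((∑' m, a m * g m y)) _, abs_sub_comm y x, abs_of_nonneg (sub_nonneg.2 h)]
    exact key_bound_aux hS hy hx h

end Bounds

noncomputable def cc (n : ℕ) : ℝ := (hh (n+1) + hh n)/2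
noncomputable def ww (n : ℕ) : ℝ := (hh n - hh (n+1))/2

lemma ww_pos (n : ℕ) : 0 < ww n := by
  have := hh_succ_lt n
  unfold ww; linarith

lemma cc_pos (n : ℕ) : 0 < cc n := by
  have h1 := hh_pos n; have h2 := hh_pos (n+1)
  unfold cc; linarith

lemma cc_ge (n : ℕ) : hh (n+1) ≤ cc n := by
  have := hh_succ_lt n; unfold cc; linarith

lemma cc_le (n : ℕ) : cc n ≤ hh n := by
  have := hh_succ_lt n; unfold cc; linarith

lemma cc_lt_one (n : ℕ) : cc n ≤ 1 := le_trans (cc_le n) (hh_le_one n)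

lemma g_cc (n : ℕ) : g n (cc n) = ww n := by
  have h1 : cc n - hh (n+1) = ww n := by unfold cc ww; ring
  have h2 : hh n - cc n = ww n := by unfold cc ww; ring
  unfold g
  rw [h1, h2, min_self, max_eq_right (ww_pos n).le]

lemma hh_ratio (n : ℕ) : hh (n+1) ≤ (2:ℝ)⁻¹ ^ n * hh n := by
  unfold hh
  rw [inv_pow, ← mul_inv, ← pow_add]
  apply inv_anti₀ (by positivity)
  apply pow_le_pow_right₀ one_le_two
  have : (n+1)^2 = n^2 + 2*n + 1 := by ring
  omega

lemma ratio_bound (n : ℕ) : 1 - 2 * (2:ℝ)⁻¹ ^ n ≤ ww n / cc n := by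
  rw [le_div_iff₀ (cc_pos n)]
  have hq := hh_ratio n
  have h1 : (0:ℝ) ≤ (2:ℝ)⁻¹ ^ n * hh (n+1) := mul_nonneg (by positivity) (hh_pos _).le
  have h2 := hh_pos n
  have h3 := hh_pos (n+1)
  unfold ww cc
  nlinarith

lemma exists_tail (a : ℕ → ℝ) (S : ℝ) (hlt : ∀ n, |a n| < S)
    (hSup : ∀ y, y < S → ∃ n, y < |a n|) (N : ℕ) {δ : ℝ} (hδ : 0 < δ) :
    ∃ n, N ≤ n ∧ S - δ < |a n| := by
  obtain ⟨m, hm, hMe⟩ := Finset.exists_mem_eq_sup' (s := Finset.range (N+1))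
    (by simp) (fun n => |a n|)
  have hM : (Finset.range (N+1)).sup' (by simp) (fun n => |a n|) < S := hMe ▸ hlt m
  obtain ⟨n, hn⟩ := hSup (max ((Finset.range (N+1)).sup' (by simp) (fun n => |a n|)) (S - δ))
    (max_lt hM (by linarith))
  refine ⟨n, ?_, lt_of_le_of_lt (le_max_right _ _) hn⟩
  by_contra hc
  push_neg at hc
  have h1 : |a n| ≤ (Finset.range (N+1)).sup' (by simp) (fun n => |a n|) :=
    Finset.le_sup' (fun n => |a n|) (Finset.mem_range.2 (by omega))
  have h2 := le_max_left ((Finset.range (N+1)).sup' (by simp) (fun n => |a n|)) (S - δ)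
  linarith

end Stmt6

open Stmt6

/-- for a ∈ ℓ∞ (indexed so that a n is the coefficient of f_{n+1}),
the pointwise sum F = Σ aₙ fₙ is a well-defined Lipschitz function on [0,1] vanishing
at 0, with ‖F‖ = sup |aₙ|, attaining its pointwise norm; hence a ↦ F is a linear
isometric embedding of ℓ∞ into Lip₀([0,1]) with image in PNA([0,1]) ∪ {0}. -/
theorem stmt6 (a : ℕ → ℝ) (ha : ∃ C, ∀ n, |a n| ≤ C)
    (F : (Set.Icc (0:ℝ) 1) → ℝ)
    (hF : ∀ x : (Set.Icc (0:ℝ) 1), F x = ∑' n : ℕ, a n * tent (n + 1) x.1) :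
    (∀ x : (Set.Icc (0:ℝ) 1), Summable fun n : ℕ => a n * tent (n + 1) x.1) ∧
    F ⟨0, by norm_num⟩ = 0 ∧ (∃ K, LipschitzWith K F) ∧
    lipNorm F = (⨆ n, |a n|) ∧ (a ≠ 0 → PointwiseAttains F) := by
  classical
  obtain ⟨C, hC⟩ := ha
  have hbdd : BddAbove (Set.range fun n => |a n|) := ⟨C, by rintro _ ⟨n, rfl⟩; exact hC n⟩
  set S := ⨆ n, |a n| with hSdef
  have hS : ∀ n, |a n| ≤ S := fun n => le_ciSup hbdd n
  have hS0 : 0 ≤ S := S_nonneg hS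
  have hFg : ∀ x : (Set.Icc (0:ℝ) 1), F x = ∑' n : ℕ, a n * g n x.1 := by
    intro x
    rw [hF x]
    exact tsum_congr fun n => by rw [tent_eq]
  set P : ℕ → (Set.Icc (0:ℝ) 1) := fun n => ⟨hh (n+1), ⟨(hh_pos _).le, hh_le_one _⟩⟩ with hP
  set Q : ℕ → (Set.Icc (0:ℝ) 1) := fun n => ⟨cc n, ⟨(cc_pos n).le, cc_lt_one n⟩⟩ with hQ
  have hccw : ∀ n, cc n - hh (n+1) = ww n := fun n => by unfold cc ww; ring
  have hFP : ∀ n, F (P n) = 0 := by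
    intro n
    rw [hFg, show (P n).1 = hh (n+1) from rfl, T_eq a le_rfl (hh_succ_lt n).le,
      g_eq_zero_left n le_rfl, mul_zero]
  have hFQ : ∀ n, F (Q n) = a n * ww n := by
    intro n
    rw [hFg, show (Q n).1 = cc n from rfl, T_eq a (cc_ge n) (cc_le n), g_cc]
  have hdPQ : ∀ n, dist (P n) (Q n) = ww n := by
    intro n
    rw [Subtype.dist_eq, Real.dist_eq]
    show |hh (n+1) - cc n| = _
    rw [abs_sub_comm, hccw n]
    exact abs_of_pos (ww_pos n)
  have hPQne : ∀ n, P n ≠ Q n := by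
    intro n h
    have h2 := congrArg Subtype.val h
    simp only [hP, hQ] at h2
    have := ww_pos n
    rw [← hccw n] at this
    exact absurd h2 (by linarith)
  have hrn : ∀ n, |a n| = |F (Q n) - F (P n)| / dist (P n) (Q n) := by
    intro n
    rw [hFP, hFQ, hdPQ, sub_zero, abs_mul, abs_of_pos (ww_pos n), mul_div_assoc,
      div_self (ww_pos n).ne', mul_one]
  have hub : ∀ r ∈ {r : ℝ | ∃ p q : (Set.Icc (0:ℝ) 1), p ≠ q ∧ r = |F q - F p| / dist p q},
      r ≤ S := by
    rintro r ⟨p, q, hpq, rfl⟩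
    have hd : (0:ℝ) < dist p q := dist_pos.2 hpq
    rw [div_le_iff₀ hd, hFg, hFg, Subtype.dist_eq, Real.dist_eq, abs_sub_comm p.1 q.1]
    exact key_bound hS p.2 q.2
  have hlip : lipNorm F = S := by
    unfold lipNorm
    apply le_antisymm (Real.sSup_le hub hS0)
    exact ciSup_le fun n => le_csSup ⟨S, hub⟩ ⟨P n, Q n, hPQne n, hrn n⟩
  refine ⟨?_, ?_, ?_, hlip, ?_⟩
  · intro x
    simp only [tent_eq]
    exact summable_g a x.2.1 x.2.2
  · rw [hFg]
    exact T_zero a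
  · refine ⟨Real.toNNReal S, LipschitzWith.of_dist_le_mul fun x y => ?_⟩
    rw [Real.dist_eq, hFg, hFg, Subtype.dist_eq, Real.dist_eq, Real.coe_toNNReal S hS0]
    exact key_bound hS y.2 x.2
  · intro ha0
    have hSpos : 0 < S := by
      obtain ⟨n, hn⟩ := Function.ne_iff.1 ha0
      exact lt_of_lt_of_le (abs_pos.2 hn) (hS n)
    by_cases hatt : ∃ n, |a n| = S
    · obtain ⟨n, hn⟩ := hatt
      refine ⟨P n, ?_⟩
      rw [hlip]
      unfold pnormAt
      have hub' : ∀ r ∈ {r : ℝ | ∃ q, q ≠ P n ∧ r = |F q - F (P n)| / dist (P n) q}, r ≤ S := by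
        rintro r ⟨q, hq, rfl⟩
        exact hub _ ⟨P n, q, Ne.symm hq, rfl⟩
      apply le_antisymm (Real.sSup_le hub' hS0)
      rw [← hn]
      exact le_csSup ⟨S, hub'⟩ ⟨Q n, (hPQne n).symm, hrn n⟩
    · push_neg at hatt
      have hlt : ∀ n, |a n| < S := fun n => lt_of_le_of_ne (hS n) (hatt n)
      refine ⟨⟨0, by norm_num⟩, ?_⟩
      rw [hlip]
      unfold pnormAt
      set p0 : (Set.Icc (0:ℝ) 1) := (⟨0, by norm_num⟩ : (Set.Icc (0:ℝ) 1)) with hp0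
      set s' := {r : ℝ | ∃ q, q ≠ p0 ∧ r = |F q - F p0| / dist p0 q} with hs'
      have hub' : ∀ r ∈ s', r ≤ S := by
        rintro r ⟨q, hq, rfl⟩
        exact hub _ ⟨p0, q, Ne.symm hq, rfl⟩
      apply le_antisymm (Real.sSup_le hub' hS0)
      have hbdd' : BddAbove s' := ⟨S, hub'⟩
      have hFp0 : F p0 = 0 := by rw [hFg]; exact T_zero a
      have hq0 : ∀ n, (Q n) ≠ p0 := by
        intro n h
        have h2 := congrArg Subtype.val h
        simp only [hQ, hp0] at h2
        exact absurd h2 (ne_of_gt (cc_pos n))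
      have hdist : ∀ n, dist p0 (Q n) = cc n := by
        intro n
        rw [Subtype.dist_eq, Real.dist_eq]
        show |(0:ℝ) - cc n| = _
        rw [zero_sub, abs_neg]
        exact abs_of_pos (cc_pos n)
      have hmem : ∀ n, |a n| * (ww n / cc n) ∈ s' := by
        intro n
        refine ⟨Q n, hq0 n, ?_⟩
        rw [hFp0, hFQ, hdist, sub_zero, abs_mul, abs_of_pos (ww_pos n), mul_div_assoc]
      by_contra hc
      push_neg at hc
      set ε := S - sSup s' with hε
      have hεpos : 0 < ε := by rw [hε]; linarith
      have h0le : 0 ≤ sSup s' :=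
        le_trans (mul_nonneg (abs_nonneg _) (div_nonneg (ww_pos 0).le (cc_pos 0).le))
          (le_csSup hbdd' (hmem 0))
      set δ := ε/2 with hδd
      have hδpos : 0 < δ := by rw [hδd]; linarith
      obtain ⟨N, hN⟩ := exists_pow_lt_of_lt_one
        (show (0:ℝ) < δ/(2*S) by positivity) (by norm_num : (2:ℝ)⁻¹ < 1)
      obtain ⟨n, hnN, hban⟩ := exists_tail a S hlt
        (fun y hy => exists_lt_of_lt_ciSup hy) N hδpos
      have ht : (2:ℝ)⁻¹ ^ n ≤ (2:ℝ)⁻¹ ^ N :=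
        pow_le_pow_of_le_one (by norm_num) (by norm_num) hnN
      have ht2 : 2 * S * (2:ℝ)⁻¹ ^ n < δ := by
        have h3 := lt_of_le_of_lt ht hN
        rw [lt_div_iff₀ (by positivity)] at h3
        linarith
      have hδS : δ ≤ S/2 := by rw [hδd, hε]; linarith
      have hratio := ratio_bound n
      have hratio1 : ww n / cc n ≤ 1 := by
        rw [div_le_one (cc_pos n)]
        have := hh_pos (n+1); unfold ww cc; linarith
      have htn : 0 ≤ (2:ℝ)⁻¹ ^ n := pow_nonneg (by norm_num) n
      have hkey : sSup s' < |a n| * (ww n / cc n) := by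
        have h1 : (S - δ) * (1 - 2 * (2:ℝ)⁻¹ ^ n) ≤ |a n| * (ww n / cc n) := by
          apply mul_le_mul hban.le hratio ?_ (abs_nonneg _)
          nlinarith
        have h2 : sSup s' < (S - δ) * (1 - 2 * (2:ℝ)⁻¹ ^ n) := by
          have hss : sSup s' = S - 2*δ := by rw [hδd, hε]; ring
          rw [hss]
          nlinarith [mul_nonneg htn hδpos.le]
        linarith
      exact absurd (le_csSup hbdd' (hmem n)) (not_le.2 hkey)
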